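/- Let f : ℝ³ → ℝ be three times continuously differentiable and let x₀ ∈ ℝ³ satisfy f(x₀) = 0 and ∇f(x₀) ≠ 0. Then there exist δ > 0 and C > 0 such that for all z₁, z₂ in the open ball of radius δ around x₀ with f(z₁) = f(z₂) = 0, setting a := (z₁ + z₂)/2 and b := (z₁ − z₂)/2, one has ∇f(a) ≠ 0 and ‖(b × Dn̂(a)[b]) × n̂(a)‖ ≤ C ‖b‖⁴. -/

import Mathlib

/-!
By the double cross product formula and `Dn̂(a)[b] ⊥ n̂(a)` (differentiate `‖n̂‖² ≡ 1`), the vector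
`(b × Dn̂(a)[b]) × n̂(a)` equals `⟨b, n̂(a)⟩ Dn̂(a)[b]`, and `⟨b, n̂(a)⟩ = Df(a)[b] / ‖∇f(a)‖`.
Since `f(a + b) = f(a - b) = 0`, the central difference of `t ↦ f(a + t b)` on `[-1, 1]`, in which
the even Taylor terms cancel, gives `|Df(a)[b]| = O(‖b‖³)`, while `Dn̂(a)[b] = O(‖b‖)`.
-/

/-- Cross product on `ℝ³` (as `EuclideanSpace ℝ (Fin 3)`). -/
noncomputable def cross3 (a b : EuclideanSpace ℝ (Fin 3)) : EuclideanSpace ℝ (Fin 3) :=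
  WithLp.toLp 2 (crossProduct a b)

/-- The unit normal field `n̂(x) = ∇f(x)/‖∇f(x)‖` of level surfaces of `f`. -/
noncomputable def nhat (f : EuclideanSpace ℝ (Fin 3) → ℝ)
    (x : EuclideanSpace ℝ (Fin 3)) : EuclideanSpace ℝ (Fin 3) :=
  ‖gradient f x‖⁻¹ • gradient f x

open Set Filter Topology

section TaylorOnLines

variable {E : Type*} [NormedAddCommGroup E] [NormedSpace ℝ E]

theorem taylorWithinEval_eq_sum_iteratedDeriv {g : ℝ → ℝ} {n : ℕ} (hg : ContDiff ℝ n g)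
    {s : Set ℝ} (hs : UniqueDiffOn ℝ s) {x₀ : ℝ} (hx₀ : x₀ ∈ s) (x : ℝ) :
    taylorWithinEval g n s x₀ x =
      ∑ k ∈ Finset.range (n + 1), iteratedDeriv k g x₀ * (x - x₀) ^ k / k.factorial := by
  rw [taylor_within_apply]
  refine Finset.sum_congr rfl fun k hk => ?_
  rw [iteratedDerivWithin_eq_iteratedDeriv hs
    (hg.contDiffAt.of_le (by exact_mod_cast Finset.mem_range_succ_iff.1 hk)) hx₀, smul_eq_mul]
  ring

theorem exists_taylor_lagrange_two {g : ℝ → ℝ} (hg : ContDiff ℝ 3 g) {x : ℝ} (hx : x ≠ 0) :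
    ∃ ξ ∈ uIoo 0 x, g x = g 0 + deriv g 0 * x + iteratedDeriv 2 g 0 * x ^ 2 / 2 +
      iteratedDeriv 3 g ξ * x ^ 3 / 6 := by
  obtain ⟨ξ, hξ, h⟩ := taylor_mean_remainder_lagrange_iteratedDeriv (n := 2) hx.symm hg.contDiffOn
  refine ⟨ξ, hξ, ?_⟩
  rw [taylorWithinEval_eq_sum_iteratedDeriv (n := 2) (hg.of_le (by norm_num))
    (uniqueDiffOn_uIcc hx.symm) left_mem_uIcc] at h
  simp only [Nat.reduceAdd, sub_zero, Finset.sum_range_succ, Finset.range_one,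
    Finset.sum_singleton, iteratedDeriv_zero, pow_zero, mul_one, Nat.factorial, Nat.cast_one,
    div_one, iteratedDeriv_one, pow_one, Nat.succ_eq_add_one, zero_add, Nat.cast_ofNat,
    Nat.reduceMul] at h
  linarith

theorem abs_sub_sub_two_mul_deriv_le {g : ℝ → ℝ} (hg : ContDiff ℝ 3 g) {M : ℝ}
    (hM : ∀ t ∈ Icc (-1 : ℝ) 1, |iteratedDeriv 3 g t| ≤ M) :
    |g 1 - g (-1) - 2 * deriv g 0| ≤ M / 3 := by
  obtain ⟨ξ₁, hξ₁, h₁⟩ := exists_taylor_lagrange_two hg one_ne_zero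
  obtain ⟨ξ₂, hξ₂, h₂⟩ := exists_taylor_lagrange_two hg (neg_ne_zero.2 one_ne_zero)
  rw [uIoo_of_le zero_le_one] at hξ₁
  rw [uIoo_of_ge (by norm_num)] at hξ₂
  have hM₁ := abs_le.1 (hM ξ₁ ⟨by linarith [hξ₁.1], hξ₁.2.le⟩)
  have hM₂ := abs_le.1 (hM ξ₂ ⟨hξ₂.1.le, by linarith [hξ₂.2]⟩)
  norm_num at h₁ h₂
  rw [abs_le]
  constructor <;> linarith

theorem iteratedDeriv_comp_add_smul {F : Type*} [NormedAddCommGroup F] [NormedSpace ℝ F]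
    {f : E → F} {n : WithTop ℕ∞} (hf : ContDiff ℝ n f) {i : ℕ} (hi : i ≤ n) (a b : E) (t : ℝ) :
    iteratedDeriv i (fun t : ℝ => f (a + t • b)) t =
      iteratedFDeriv ℝ i f (a + t • b) fun _ => b := by
  have hcomp : (fun t : ℝ => f (a + t • b)) =
      (fun z => f (a + z)) ∘ ContinuousLinearMap.toSpanSingleton ℝ b := rfl
  have hshift : ContDiff ℝ n fun z => f (a + z) := hf.comp (contDiff_const.add contDiff_id)
  rw [iteratedDeriv_eq_iteratedFDeriv, hcomp,
    ContinuousLinearMap.iteratedFDeriv_comp_right _ hshift _ hi,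
    iteratedFDeriv_comp_add_left]
  simp

theorem abs_sub_sub_two_mul_fderiv_le {f : E → ℝ} (hf : ContDiff ℝ 3 f) {a b : E} {M : ℝ}
    (hM : ∀ t ∈ Icc (-1 : ℝ) 1, ‖iteratedFDeriv ℝ 3 f (a + t • b)‖ ≤ M) :
    |f (a + b) - f (a - b) - 2 * fderiv ℝ f a b| ≤ M / 3 * ‖b‖ ^ 3 := by
  have hg : ContDiff ℝ 3 fun t : ℝ => f (a + t • b) :=
    hf.comp (contDiff_const.add (contDiff_id.smul contDiff_const))
  have h := abs_sub_sub_two_mul_deriv_le hg (M := M * ‖b‖ ^ 3) fun t ht => by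
    rw [iteratedDeriv_comp_add_smul hf le_rfl, ← Real.norm_eq_abs]
    exact (ContinuousMultilinearMap.le_opNorm_mul_pow_of_le _ (pi_norm_const_le b)).trans
      (by gcongr; exact hM t ht)
  rw [← iteratedDeriv_one, iteratedDeriv_comp_add_smul hf (by norm_num), iteratedFDeriv_one_apply]
    at h
  simpa only [one_smul, neg_one_smul, zero_smul, add_zero, ← sub_eq_add_neg, div_mul_eq_mul_div]
    using h

end TaylorOnLines

theorem ContDiff.gradient {F : Type*} [NormedAddCommGroup F] [InnerProductSpace ℝ F]
    [CompleteSpace F] {f : F → ℝ} {m n : WithTop ℕ∞} (hf : ContDiff ℝ n f) (hmn : m + 1 ≤ n) :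
    ContDiff ℝ m (gradient f) :=
  (InnerProductSpace.toDual ℝ F).symm.contDiff.comp (hf.fderiv_right hmn)

theorem inner_fderiv_apply_self_eq_zero {E F : Type*} [NormedAddCommGroup E] [NormedSpace ℝ E]
    [NormedAddCommGroup F] [InnerProductSpace ℝ F] {u : E → F} {a : E} {c : ℝ}
    (hu : DifferentiableAt ℝ u a) (hc : ∀ᶠ x in 𝓝 a, ‖u x‖ = c) (b : E) :
    inner ℝ (fderiv ℝ u a b) (u a) = 0 := by
  have hconst : fderiv ℝ (fun x => inner ℝ (u x) (u x)) a = 0 := by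
    have hev : (fun x => inner ℝ (u x) (u x)) =ᶠ[𝓝 a] fun _ => c ^ 2 := by
      filter_upwards [hc] with x hx
      rw [real_inner_self_eq_norm_sq, hx]
    rw [hev.fderiv_eq, fderiv_const_apply]
  have h := fderiv_inner_apply (𝕜 := ℝ) hu hu b
  rw [hconst, zero_apply] at h
  linarith [real_inner_comm (u a) (fderiv ℝ u a b)]

theorem cross3_cross3 (u v n : EuclideanSpace ℝ (Fin 3)) :
    cross3 (cross3 u v) n = inner ℝ u n • v - inner ℝ v n • u := by
  unfold cross3
  ext i
  simp only [crossProduct, PiLp.inner_apply, RCLike.inner_apply, starRingEnd_apply, star_trivial,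
    Fin.sum_univ_three, PiLp.sub_apply, PiLp.smul_apply, smul_eq_mul, LinearMap.mk₂_apply]
  fin_cases i <;> simp <;> ring

section UnitNormal

variable {f : EuclideanSpace ℝ (Fin 3) → ℝ}

theorem norm_nhat {x : EuclideanSpace ℝ (Fin 3)} (hx : gradient f x ≠ 0) : ‖nhat f x‖ = 1 := by
  rw [nhat, norm_smul, norm_inv, norm_norm, inv_mul_cancel₀ (norm_ne_zero_iff.2 hx)]

theorem inner_nhat (x b : EuclideanSpace ℝ (Fin 3)) :
    inner ℝ b (nhat f x) = fderiv ℝ f x b / ‖gradient f x‖ := by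
  rw [nhat, real_inner_smul_right, real_inner_comm, gradient, InnerProductSpace.toDual_symm_apply,
    inv_mul_eq_div]

theorem isOpen_gradient_ne_zero (hf : ContDiff ℝ 2 f) :
    IsOpen {x | gradient f x ≠ 0} :=
  isOpen_ne_fun ((hf.gradient (m := 1) le_rfl).continuous) continuous_const

theorem contDiffAt_nhat (hf : ContDiff ℝ 2 f) {x : EuclideanSpace ℝ (Fin 3)}
    (hx : gradient f x ≠ 0) : ContDiffAt ℝ 1 (nhat f) x :=
  have hg := (hf.gradient (m := 1) le_rfl).contDiffAt (x := x)
  ((hg.norm ℝ hx).inv (norm_ne_zero_iff.2 hx)).smul hg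

theorem continuousOn_fderiv_nhat (hf : ContDiff ℝ 2 f) :
    ContinuousOn (fderiv ℝ (nhat f)) {x | gradient f x ≠ 0} :=
  ContDiffOn.continuousOn_fderiv_of_isOpen (fun _ hx => (contDiffAt_nhat hf hx).contDiffWithinAt)
    (isOpen_gradient_ne_zero hf) le_rfl

theorem inner_fderiv_nhat_nhat (hf : ContDiff ℝ 2 f) {a : EuclideanSpace ℝ (Fin 3)}
    (ha : gradient f a ≠ 0) (b : EuclideanSpace ℝ (Fin 3)) :
    inner ℝ (fderiv ℝ (nhat f) a b) (nhat f a) = 0 :=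
  inner_fderiv_apply_self_eq_zero ((contDiffAt_nhat hf ha).differentiableAt one_ne_zero)
    (eventually_of_mem ((isOpen_gradient_ne_zero hf).mem_nhds ha) fun _ => norm_nhat) b

theorem norm_cross3_cross3_fderiv_nhat (hf : ContDiff ℝ 2 f) {a : EuclideanSpace ℝ (Fin 3)}
    (ha : gradient f a ≠ 0) (b : EuclideanSpace ℝ (Fin 3)) :
    ‖cross3 (cross3 b (fderiv ℝ (nhat f) a b)) (nhat f a)‖ =
      |fderiv ℝ f a b| / ‖gradient f a‖ * ‖fderiv ℝ (nhat f) a b‖ := by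
  rw [cross3_cross3, inner_fderiv_nhat_nhat hf ha, zero_smul, sub_zero, norm_smul, inner_nhat,
    Real.norm_eq_abs, abs_div, abs_norm]

end UnitNormal

theorem Convex.inv_two_smul_add_add_smul_mem {E : Type*} [AddCommGroup E] [Module ℝ E]
    {s : Set E} (hs : Convex ℝ s) {x y : E} (hx : x ∈ s) (hy : y ∈ s) {t : ℝ}
    (ht : t ∈ Icc (-1 : ℝ) 1) : (2:ℝ)⁻¹ • (x + y) + t • (2:ℝ)⁻¹ • (x - y) ∈ s := by
  convert hs.add_smul_sub_mem hy hx (t := (1 + t) / 2) ⟨by linarith [ht.1], by linarith [ht.2]⟩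
    using 1
  module

theorem norm_cross3_cross3_fderiv_nhat_le {f : EuclideanSpace ℝ (Fin 3) → ℝ}
    (hf : ContDiff ℝ 3 f) {a b : EuclideanSpace ℝ (Fin 3)} {m M K : ℝ} (hm : 0 < m)
    (hgrad : m ≤ ‖gradient f a‖)
    (hM : ∀ t ∈ Icc (-1 : ℝ) 1, ‖iteratedFDeriv ℝ 3 f (a + t • b)‖ ≤ M)
    (hK : ‖fderiv ℝ (nhat f) a‖ ≤ K) (h₁ : f (a + b) = 0) (h₂ : f (a - b) = 0) :
    ‖cross3 (cross3 b (fderiv ℝ (nhat f) a b)) (nhat f a)‖ ≤ M * K / (6 * m) * ‖b‖ ^ 4 := by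
  have hnormal : |fderiv ℝ f a b| ≤ M / 6 * ‖b‖ ^ 3 := by
    have h := abs_sub_sub_two_mul_fderiv_le hf hM
    simp only [h₁, h₂, sub_self, zero_sub, abs_neg, abs_mul, abs_two] at h
    linarith
  have hnonneg : 0 ≤ M / 6 * ‖b‖ ^ 3 := (abs_nonneg _).trans hnormal
  have hgrad₀ : gradient f a ≠ 0 := norm_pos_iff.1 (hm.trans_le hgrad)
  have htangent : ‖fderiv ℝ (nhat f) a b‖ ≤ K * ‖b‖ :=
    ((fderiv ℝ (nhat f) a).le_opNorm b).trans (by gcongr)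
  rw [norm_cross3_cross3_fderiv_nhat (hf.of_le (by norm_num)) hgrad₀]
  calc |fderiv ℝ f a b| / ‖gradient f a‖ * ‖fderiv ℝ (nhat f) a b‖
      ≤ M / 6 * ‖b‖ ^ 3 / m * (K * ‖b‖) :=
        mul_le_mul (div_le_div₀ hnonneg hnormal hm hgrad) htangent (norm_nonneg _)
          (div_nonneg hnonneg hm.le)
    _ = M * K / (6 * m) * ‖b‖ ^ 4 := by field_simp

theorem tangential_part_quartic_bound_general
    (f : EuclideanSpace ℝ (Fin 3) → ℝ) (hf : ContDiff ℝ 3 f)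
    (x₀ : EuclideanSpace ℝ (Fin 3)) (hx₀ : gradient f x₀ ≠ 0) :
    ∃ δ > (0:ℝ), ∃ C > (0:ℝ),
      ∀ z₁ z₂ : EuclideanSpace ℝ (Fin 3),
        z₁ ∈ Metric.ball x₀ δ → z₂ ∈ Metric.ball x₀ δ → f z₁ = 0 → f z₂ = 0 →
          gradient f ((2:ℝ)⁻¹ • (z₁ + z₂)) ≠ 0 ∧
          ‖cross3
              (cross3 ((2:ℝ)⁻¹ • (z₁ - z₂))
                (fderiv ℝ (nhat f) ((2:ℝ)⁻¹ • (z₁ + z₂)) ((2:ℝ)⁻¹ • (z₁ - z₂))))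
              (nhat f ((2:ℝ)⁻¹ • (z₁ + z₂)))‖
            ≤ C * ‖(2:ℝ)⁻¹ • (z₁ - z₂)‖ ^ 4 := by
  set m := ‖gradient f x₀‖ / 2
  have hm : 0 < m := by positivity
  obtain ⟨r, hr, hball⟩ : ∃ r > 0, Metric.closedBall x₀ r ⊆ {y | m < ‖gradient f y‖} :=
    Metric.nhds_basis_closedBall.mem_iff.1 <| (isOpen_lt continuous_const
      (hf.gradient (m := 1) (by norm_num)).continuous.norm).mem_nhds
        (half_lt_self (norm_pos_iff.2 hx₀))
  obtain ⟨M, hM⟩ := (isCompact_closedBall x₀ r).exists_bound_of_continuousOn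
    (hf.continuous_iteratedFDeriv le_rfl).continuousOn
  obtain ⟨K, hK⟩ := (isCompact_closedBall x₀ r).exists_bound_of_continuousOn
    ((continuousOn_fderiv_nhat (hf.of_le (by norm_num))).mono fun _ hy =>
      norm_pos_iff.1 (hm.trans (hball hy)))
  refine ⟨r, hr, max (M * K / (6 * m)) 1, by positivity, fun z₁ z₂ hz₁ hz₂ h₁ h₂ => ?_⟩
  have hseg t (ht : t ∈ Icc (-1 : ℝ) 1) :=
    Metric.ball_subset_closedBall ((convex_ball x₀ r).inv_two_smul_add_add_smul_mem hz₁ hz₂ ht)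
  have hmid := hseg 0 (by norm_num)
  rw [zero_smul, add_zero] at hmid
  have ha : m < ‖gradient f ((2:ℝ)⁻¹ • (z₁ + z₂))‖ := hball hmid
  refine ⟨norm_pos_iff.1 (hm.trans ha), ?_⟩
  refine (norm_cross3_cross3_fderiv_nhat_le hf hm ha.le (fun t ht => hM _ (hseg t ht))
    (hK _ hmid) ?_ ?_).trans ?_
  · convert h₁ using 2; module
  · convert h₂ using 2; module
  · gcongr; exact le_max_left _ _

/-- For two nearby points `z₁, z₂` on the level surface `{f = 0}`, with midpoint
`a = (z₁ + z₂)/2` and relative vector `b = (z₁ − z₂)/2`, the tangential part of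
`b × Dn̂(a)[b]` is of quartic order: `‖(b × Dn̂(a)[b]) × n̂(a)‖ ≤ C ‖b‖⁴`. -/
theorem tangential_part_quartic_bound
    (f : EuclideanSpace ℝ (Fin 3) → ℝ) (hf : ContDiff ℝ 3 f)
    (x₀ : EuclideanSpace ℝ (Fin 3)) (hx₀0 : f x₀ = 0) (hx₀ : gradient f x₀ ≠ 0) :
    ∃ δ > (0:ℝ), ∃ C > (0:ℝ),
      ∀ z₁ z₂ : EuclideanSpace ℝ (Fin 3),
        z₁ ∈ Metric.ball x₀ δ → z₂ ∈ Metric.ball x₀ δ → f z₁ = 0 → f z₂ = 0 →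
          gradient f ((2:ℝ)⁻¹ • (z₁ + z₂)) ≠ 0 ∧
          ‖cross3
              (cross3 ((2:ℝ)⁻¹ • (z₁ - z₂))
                (fderiv ℝ (nhat f) ((2:ℝ)⁻¹ • (z₁ + z₂)) ((2:ℝ)⁻¹ • (z₁ - z₂))))
              (nhat f ((2:ℝ)⁻¹ • (z₁ + z₂)))‖
            ≤ C * ‖(2:ℝ)⁻¹ • (z₁ - z₂)‖ ^ 4 :=
  tangential_part_quartic_bound_general f hf x₀ hx₀
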